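/- arXiv:math/0312044 — 5 statements merged into one kernel-verified Lean document; each statement's English description precedes it below -/
import Mathlib

section
/- Let n ≥ 1 and k ≥ 0 be integers and let f : [0,1] → M_n(ℂ) be a lower semicontinuous projection-valued function such that every projection f(t) has rank exactly k. Then f is continuous with respect to the operator norm. -/
/-!
Along an orthonormal basis the quadratic forms `t ↦ Re⟨f(t)bᵢ, bᵢ⟩` sum to `tr f(t) = rank f(t) = k`,
a constant. A finite family of lower semicontinuous functions with constant sum is also upper
semicontinuous, hence continuous; since every unit vector lies in some orthonormal basis, all
quadratic forms of `f` are continuous, and polarization gives continuity of every matrix entry.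
-/

noncomputable section
open scoped Matrix

abbrev I01 : Type := Set.Icc (0:ℝ) 1

def IsLSCProjMat (n : ℕ) (f : I01 → Matrix (Fin n) (Fin n) ℂ) : Prop :=
  (∀ t, (f t)ᴴ = f t ∧ f t * f t = f t) ∧
  ∀ v : Fin n → ℂ,
    LowerSemicontinuous fun t => (dotProduct (star v) ((f t).mulVec v)).re

open scoped InnerProductSpace

theorem continuous_of_lowerSemicontinuous_of_sum_eq_const {X ι : Type*} [TopologicalSpace X]
    [Fintype ι] {g : ι → X → ℝ} (hg : ∀ i, LowerSemicontinuous (g i)) {c : ℝ}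
    (hsum : ∀ t, ∑ i, g i t = c) (i : ι) : Continuous (g i) := by
  classical
  have hrest : LowerSemicontinuous fun t => ∑ j ∈ Finset.univ.erase i, g j t :=
    lowerSemicontinuous_sum fun j _ => hg j
  have heq : g i = (fun s => c - s) ∘ fun t => ∑ j ∈ Finset.univ.erase i, g j t := by
    funext t
    rw [Function.comp_apply, ← hsum t, ← Finset.add_sum_erase _ _ (Finset.mem_univ i),
      add_sub_cancel_right]
  refine continuous_iff_lower_upperSemicontinuous.mpr ⟨hg i, ?_⟩
  rw [heq]
  exact (continuous_sub_left c).comp_lowerSemicontinuous_antitone hrest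
    fun _ _ h => sub_le_sub_left h c

section

variable {X 𝕜 E : Type*} [TopologicalSpace X] [RCLike 𝕜] [NormedAddCommGroup E]
  [InnerProductSpace 𝕜 E]

theorem re_inner_map_self_smul (T : E →ₗ[𝕜] E) (r : ℝ) (x : E) :
    RCLike.re ⟪(r : 𝕜) • x, T ((r : 𝕜) • x)⟫_𝕜 = r ^ 2 * RCLike.re ⟪x, T x⟫_𝕜 := by
  rw [map_smul, inner_smul_left, inner_smul_right, RCLike.conj_ofReal, ← mul_assoc,
    ← RCLike.ofReal_mul, RCLike.re_ofReal_mul, sq]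

theorem exists_orthonormalBasis_mem_of_norm_eq_one [FiniteDimensional 𝕜 E] {u : E}
    (hu : ‖u‖ = 1) : ∃ (s : Finset E) (b : OrthonormalBasis s 𝕜 E), ∃ i, b i = u := by
  have hsingle : Orthonormal 𝕜 ((↑) : ({u} : Set E) → E) := by
    refine ⟨by rintro ⟨_, rfl⟩; exact hu, ?_⟩
    intro v w hvw
    exact absurd (Subsingleton.elim v w) hvw
  obtain ⟨s, b, hus, hb⟩ := hsingle.exists_orthonormalBasis_extension
  exact ⟨s, b, ⟨u, hus rfl⟩, by rw [hb]⟩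

theorem continuous_re_inner_map_self_of_trace_eq_const [FiniteDimensional 𝕜 E]
    {T : X → E →ₗ[𝕜] E} (hT : ∀ x, LowerSemicontinuous fun t => RCLike.re ⟪x, T t x⟫_𝕜)
    {c : 𝕜} (htrace : ∀ t, LinearMap.trace 𝕜 E (T t) = c) (x : E) :
    Continuous fun t => RCLike.re ⟪x, T t x⟫_𝕜 := by
  obtain rfl | hx := eq_or_ne x 0
  · simpa using continuous_const
  obtain ⟨s, b, i, hbi⟩ := exists_orthonormalBasis_mem_of_norm_eq_one (𝕜 := 𝕜)
    (norm_smul_inv_norm (𝕜 := 𝕜) hx)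
  have hsum : ∀ t, ∑ j, RCLike.re ⟪b j, T t (b j)⟫_𝕜 = RCLike.re c := fun t => by
    rw [← htrace t, LinearMap.trace_eq_sum_inner _ b, map_sum]
  have hunit := continuous_of_lowerSemicontinuous_of_sum_eq_const (fun j => hT (b j)) hsum i
  have hx_eq : x = ((‖x‖ : ℝ) : 𝕜) • b i := by
    rw [hbi, smul_smul, ← RCLike.ofReal_inv, ← RCLike.ofReal_mul,
      mul_inv_cancel₀ (norm_ne_zero_iff.mpr hx), RCLike.ofReal_one, one_smul]
  rw [hx_eq]
  simp_rw [re_inner_map_self_smul]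
  exact continuous_const.mul hunit

end

theorem continuous_inner_map_of_continuous_re_inner_map_self {X E : Type*} [TopologicalSpace X]
    [NormedAddCommGroup E] [InnerProductSpace ℂ E] {T : X → E →ₗ[ℂ] E}
    (hsymm : ∀ t, (T t).IsSymmetric)
    (hT : ∀ x, Continuous fun t => RCLike.re ⟪x, T t x⟫_ℂ) (x y : E) :
    Continuous fun t => ⟪x, T t y⟫_ℂ := by
  have hquad : ∀ z, Continuous fun t => ⟪T t z, z⟫_ℂ := fun z => by
    have hreal : (fun t => ⟪T t z, z⟫_ℂ) = fun t => ((RCLike.re ⟪z, T t z⟫_ℂ : ℝ) : ℂ) :=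
      funext fun t => by rw [hsymm t]; exact ((hsymm t).coe_re_inner_self_apply z).symm
    rw [hreal]
    exact Complex.continuous_ofReal.comp (hT z)
  simp only [← hsymm _ x y, inner_map_polarization' _ x y]
  fun_prop

namespace Matrix

variable {n : Type*} [Fintype n] [DecidableEq n]

theorem trace_eq_rank_of_isIdempotentElem {K : Type*} [Field K] {A : Matrix n n K}
    (hA : IsIdempotentElem A) : A.trace = A.rank := by
  have hlin : IsIdempotentElem (toLin' A) := hA.map toLinAlgEquiv'
  rw [← trace_toLin'_eq, (LinearMap.IsIdempotentElem.isProj_range _ hlin).trace, rank,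
    toLin'_apply']

variable {𝕜 : Type*} [RCLike 𝕜]

theorem trace_toEuclideanLin (A : Matrix n n 𝕜) :
    LinearMap.trace 𝕜 _ (toEuclideanLin A) = A.trace := by
  rw [toEuclideanLin_eq_toLin_orthonormal, trace_toLin_eq]

theorem inner_toEuclideanLin (A : Matrix n n 𝕜) (x y : EuclideanSpace 𝕜 n) :
    ⟪x, toEuclideanLin A y⟫_𝕜 = star (WithLp.ofLp x) ⬝ᵥ A *ᵥ WithLp.ofLp y := by
  rw [EuclideanSpace.inner_eq_star_dotProduct, ofLp_toLpLin, toLin'_apply, dotProduct_comm]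

theorem continuous_of_continuous_inner_toEuclideanLin {X : Type*} [TopologicalSpace X]
    {F : X → Matrix n n 𝕜}
    (hF : ∀ x y, Continuous fun t => ⟪x, toEuclideanLin (F t) y⟫_𝕜) : Continuous F := by
  refine continuous_matrix fun i j => ?_
  simpa [inner_toEuclideanLin] using hF (EuclideanSpace.single i 1) (EuclideanSpace.single j 1)

end Matrix

theorem stmt0_general (n k : ℕ) (f : I01 → Matrix (Fin n) (Fin n) ℂ)
    (hf : IsLSCProjMat n f) (hrank : ∀ t, (f t).rank = k) :
    Continuous f := by
  obtain ⟨hproj, hlsc⟩ := hf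
  set T := fun t => Matrix.toEuclideanLin (f t)
  have hsymm : ∀ t, (T t).IsSymmetric := fun t =>
    Matrix.isSymmetric_toEuclideanLin_iff.mpr (hproj t).1
  have htrace : ∀ t, LinearMap.trace ℂ _ (T t) = k := fun t => by
    rw [Matrix.trace_toEuclideanLin, Matrix.trace_eq_rank_of_isIdempotentElem (hproj t).2,
      hrank t]
  have hquad : ∀ x, LowerSemicontinuous fun t => RCLike.re ⟪x, T t x⟫_ℂ := fun x => by
    simpa only [T, Matrix.inner_toEuclideanLin, RCLike.re_to_complex] using hlsc (WithLp.ofLp x)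
  exact Matrix.continuous_of_continuous_inner_toEuclideanLin
    (continuous_inner_map_of_continuous_re_inner_map_self hsymm
      (continuous_re_inner_map_self_of_trace_eq_const hquad htrace))

/-- a lower semicontinuous projection-valued function on `[0,1]`
with values rank-`k` projections in `Mₙ(ℂ)` is continuous. -/
theorem stmt0 (n k : ℕ) (hn : 1 ≤ n) (f : I01 → Matrix (Fin n) (Fin n) ℂ)
    (hf : IsLSCProjMat n f) (hrank : ∀ t, (f t).rank = k) :
    Continuous f :=
  stmt0_general n k f hf hrank
end
end

section
/- Let H be a separable infinite-dimensional complex Hilbert space, k ≥ 0 an integer, and f : [0,1] → B(H) a lower semicontinuous projection-valued function such that every projection f(t) has rank exactly k. Then there exist a norm-continuous function V : [0,1] → B(H) and a projection p ∈ B(H) of rank k such that V(t)·V(t)* = p and V(t)*·V(t) = f(t) for all t ∈ [0,1]; in particular each V(t) is a finite-rank partial isometry. -/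
noncomputable section

/-- `f : [0,1] → B(H)` is a lower semicontinuous projection-valued function:
every value is a (self-adjoint idempotent) projection and for every vector `v`
the map `t ↦ Re⟨f(t)v, v⟩` is lower semicontinuous. -/
def IsLSCProjOp (H : Type*) [NormedAddCommGroup H] [InnerProductSpace ℂ H]
    [CompleteSpace H] (f : I01 → H →L[ℂ] H) : Prop :=
  (∀ t, IsSelfAdjoint (f t) ∧ f t * f t = f t) ∧
  ∀ v : H, LowerSemicontinuous fun t => (inner ℂ ((f t) v) v : ℂ).re

/-- A bounded operator `T` on `H` has rank `k`: its range is a `k`-dimensional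
subspace of `H`. -/
def OpRank (H : Type*) [NormedAddCommGroup H] [InnerProductSpace ℂ H]
    (T : H →L[ℂ] H) (k : ℕ) : Prop :=
  FiniteDimensional ℂ (LinearMap.range (T : H →ₗ[ℂ] H)) ∧
    Module.finrank ℂ (LinearMap.range (T : H →ₗ[ℂ] H)) = k

/-!
Lower semicontinuity of `t ↦ ⟪f t v, v⟫` forces the range of `f t₀` to lie almost inside the range
of `f t` for `t` near `t₀`; as all ranks are equal and finite, `f` is then norm continuous.
Projections at distance `< 1` are conjugate by Kato's unitary, which depends continuously on the
pair, so multiplying these unitaries along a fine partition of `[0,1]` gives a continuous path of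
unitaries `U` with `U t * f 0 * (U t)⋆ = f t`, and `V t = f 0 * (U t)⋆` is the required path.
-/

open Filter Topology
open scoped InnerProductSpace

section Ring

variable {R : Type*} [Ring R] {p q : R}

def projTransition (p q : R) : R := q * p + (1 - q) * (1 - p)

theorem projTransition_mul (hp : IsIdempotentElem p) (hq : IsIdempotentElem q) :
    projTransition p q * p = q * projTransition p q := by
  calc projTransition p q * p = q * (p * p) + (1 - q) * ((1 - p) * p) := by
        rw [projTransition]; noncomm_ring
    _ = (q * q) * p + (q * (1 - q)) * (1 - p) := by
        rw [hp.one_sub_mul_self, hq.mul_one_sub_self, hp.eq, hq.eq]; simp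
    _ = q * projTransition p q := by rw [projTransition]; noncomm_ring

theorem projTransition_swap_mul (hp : IsIdempotentElem p) (hq : IsIdempotentElem q) :
    projTransition q p * projTransition p q = 1 - (p - q) ^ 2 := by
  calc projTransition q p * projTransition p q
      = p * (q * q) * p + p * (q * (1 - q)) * (1 - p) + (1 - p) * ((1 - q) * q) * p
        + (1 - p) * ((1 - q) * (1 - q)) * (1 - p) := by
          rw [projTransition, projTransition]; noncomm_ring
    _ = 1 - p - p + p * p - q + q * p + p * q := by
        rw [hq.mul_one_sub_self, hq.one_sub_mul_self, hq.one_sub.eq, hq.eq]; noncomm_ring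
    _ = 1 - (p * p - p * q - q * p + q * q) := by rw [hp.eq, hq.eq]; noncomm_ring
    _ = 1 - (p - q) ^ 2 := by noncomm_ring

theorem projTransition_mul_swap (hp : IsIdempotentElem p) (hq : IsIdempotentElem q) :
    projTransition p q * projTransition q p = 1 - (p - q) ^ 2 := by
  rw [projTransition_swap_mul hq hp, ← neg_sub p q, neg_sq]

theorem projTransition_self (hp : IsIdempotentElem p) : projTransition p p = 1 := by
  rw [projTransition, hp.eq, hp.one_sub.eq, add_sub_cancel]

theorem commute_sub_sq_left (hp : IsIdempotentElem p) (hq : IsIdempotentElem q) :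
    Commute p ((p - q) ^ 2) := by
  have e : (p - q) ^ 2 = p * p - p * q - q * p + q * q := by noncomm_ring
  show p * (p - q) ^ 2 = (p - q) ^ 2 * p
  calc p * (p - q) ^ 2 = (p * p) * p - (p * p) * q - p * q * p + p * (q * q) := by
        rw [e]; noncomm_ring
    _ = p * (p * p) - p * q * p - q * (p * p) + (q * q) * p := by rw [hp.eq, hq.eq]; noncomm_ring
    _ = (p - q) ^ 2 * p := by rw [e]; noncomm_ring

theorem commute_projTransition_sub_sq (hp : IsIdempotentElem p) (hq : IsIdempotentElem q) :
    Commute (projTransition p q) ((p - q) ^ 2) := by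
  have hd : (p - q) ^ 2 = 1 - projTransition p q * projTransition q p := by
    rw [projTransition_mul_swap hp hq, sub_sub_cancel]
  show projTransition p q * (p - q) ^ 2 = (p - q) ^ 2 * projTransition p q
  calc projTransition p q * (p - q) ^ 2
      = projTransition p q * (1 - projTransition q p * projTransition p q) := by
        rw [projTransition_swap_mul hp hq, sub_sub_cancel]
    _ = (1 - projTransition p q * projTransition q p) * projTransition p q := by noncomm_ring
    _ = (p - q) ^ 2 * projTransition p q := by rw [hd]

theorem star_projTransition [StarRing R] (hp : IsSelfAdjoint p) (hq : IsSelfAdjoint q) :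
    star (projTransition p q) = projTransition q p := by
  simp [projTransition, hp.star_eq, hq.star_eq]

end Ring

section CStarAlgebra

variable {A : Type*} [CStarAlgebra A]

theorem spectrum_subset_Iio_one_of_norm_lt_one {a : A} (ha : ‖a‖ < 1) :
    spectrum ℝ a ⊆ Set.Iio 1 := by
  nontriviality A
  exact fun x hx => (le_abs_self x).trans_lt ((spectrum.norm_le_norm_of_mem hx).trans_lt ha)

theorem spectrum_sub_sq_subset_Iio_one {p q : A} (h : ‖p - q‖ < 1) :
    spectrum ℝ ((p - q) ^ 2) ⊆ Set.Iio 1 :=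
  spectrum_subset_Iio_one_of_norm_lt_one <|
    (norm_pow_le' _ two_pos).trans_lt (pow_lt_one₀ (norm_nonneg _) h two_ne_zero)

def invSqrtOneSub (d : A) : A := cfc (fun x : ℝ => (√(1 - x))⁻¹) d

theorem isSelfAdjoint_invSqrtOneSub (d : A) : IsSelfAdjoint (invSqrtOneSub d) :=
  cfc_predicate _ _

theorem Commute.invSqrtOneSub {a d : A} (h : Commute a d) : Commute a (invSqrtOneSub d) :=
  (h.symm.cfc_real _).symm

theorem invSqrtOneSub_zero : invSqrtOneSub (0 : A) = 1 := by
  simp [invSqrtOneSub, cfc_apply_zero]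

theorem continuousOn_inv_sqrt_one_sub : ContinuousOn (fun x : ℝ => (√(1 - x))⁻¹) (Set.Iio 1) :=
  ((continuous_const.sub continuous_id).sqrt.continuousOn).inv₀ fun _ hx =>
    (Real.sqrt_pos.2 (sub_pos.2 hx)).ne'

theorem invSqrtOneSub_mul_self_mul {d : A} (hd : IsSelfAdjoint d)
    (hspec : spectrum ℝ d ⊆ Set.Iio 1) :
    invSqrtOneSub d * invSqrtOneSub d * (1 - d) = 1 := by
  have hc := continuousOn_inv_sqrt_one_sub.mono hspec
  have h₁ : 1 - d = cfc (fun x : ℝ => 1 - x) d := by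
    rw [cfc_sub _ _ d, cfc_const_one ℝ d, cfc_id' ℝ d]
  rw [h₁, invSqrtOneSub, ← cfc_mul _ _ d, ← cfc_mul _ _ d]
  refine (cfc_congr fun x hx => ?_).trans (cfc_const_one ℝ d)
  have hx' : 0 < 1 - x := sub_pos.2 (hspec hx)
  field_simp
  rw [Real.sq_sqrt hx'.le]

theorem Continuous.invSqrtOneSub {X : Type*} [TopologicalSpace X] {d : X → A}
    (hd : Continuous d) (hsa : ∀ x, IsSelfAdjoint (d x))
    (hspec : ∀ x, spectrum ℝ (d x) ⊆ Set.Iio 1) :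
    Continuous fun x => invSqrtOneSub (d x) :=
  hd.cfc_of_mem_nhdsSet _ (isOpen_Iio.mem_nhdsSet.2 (Set.iUnion_subset hspec)) hsa
    continuousOn_inv_sqrt_one_sub

/-- Kato's unitary: the polar part of `projTransition p q`, whose modulus squared is
`1 - (p - q) ^ 2`. -/
def katoUnitary (p q : A) : A := projTransition p q * invSqrtOneSub ((p - q) ^ 2)

theorem katoUnitary_self {p : A} (hp : IsIdempotentElem p) : katoUnitary p p = 1 := by
  rw [katoUnitary, sub_self, zero_pow two_ne_zero, invSqrtOneSub_zero, mul_one,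
    projTransition_self hp]

theorem Continuous.katoUnitary {X : Type*} [TopologicalSpace X] {p q : X → A}
    (hp : Continuous p) (hq : Continuous q) (hpsa : ∀ x, IsSelfAdjoint (p x))
    (hqsa : ∀ x, IsSelfAdjoint (q x)) (hpq : ∀ x, ‖p x - q x‖ < 1) :
    Continuous fun x => katoUnitary (p x) (q x) :=
  ((hq.mul hp).add ((continuous_const.sub hq).mul (continuous_const.sub hp))).mul <|
    ((hp.sub hq).pow 2).invSqrtOneSub (fun x => ((hpsa x).sub (hqsa x)).pow 2)
      fun x => spectrum_sub_sq_subset_Iio_one (hpq x)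

section Kato

variable {p q : A} (hp : IsStarProjection p) (hq : IsStarProjection q) (hpq : ‖p - q‖ < 1)
include hp hq hpq

theorem katoUnitary_mem_unitary : katoUnitary p q ∈ unitary A := by
  set a := projTransition p q
  set s := invSqrtOneSub ((p - q) ^ 2)
  have hd : IsSelfAdjoint ((p - q) ^ 2) := (hp.isSelfAdjoint.sub hq.isSelfAdjoint).pow 2
  have hs : s * s * (1 - (p - q) ^ 2) = 1 :=
    invSqrtOneSub_mul_self_mul hd (spectrum_sub_sq_subset_Iio_one hpq)
  have has : Commute a s :=
    (commute_projTransition_sub_sq hp.isIdempotentElem hq.isIdempotentElem).invSqrtOneSub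
  have hds : Commute (1 - (p - q) ^ 2) s :=
    ((Commute.one_left _).sub_left (Commute.refl _)).invSqrtOneSub
  rw [Unitary.mem_iff, katoUnitary, star_mul, (isSelfAdjoint_invSqrtOneSub _).star_eq,
    star_projTransition hp.isSelfAdjoint hq.isSelfAdjoint]
  constructor
  · calc s * projTransition q p * (a * s) = s * (projTransition q p * a) * s := by noncomm_ring
      _ = s * s * (1 - (p - q) ^ 2) := by
          rw [projTransition_swap_mul hp.isIdempotentElem hq.isIdempotentElem, mul_assoc,
            hds.eq, mul_assoc]
      _ = 1 := hs
  · calc a * s * (s * projTransition q p) = a * (s * s) * projTransition q p := by noncomm_ring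
      _ = s * s * (a * projTransition q p) := by rw [(has.mul_right has).eq, mul_assoc]
      _ = 1 := by rw [projTransition_mul_swap hp.isIdempotentElem hq.isIdempotentElem, hs]

theorem katoUnitary_mul_mul_star : katoUnitary p q * p * star (katoUnitary p q) = q := by
  have hps : Commute p (invSqrtOneSub ((p - q) ^ 2)) :=
    (commute_sub_sq_left hp.isIdempotentElem hq.isIdempotentElem).invSqrtOneSub
  calc katoUnitary p q * p * star (katoUnitary p q)
      = projTransition p q * p * invSqrtOneSub ((p - q) ^ 2) * star (katoUnitary p q) := by
        rw [katoUnitary, mul_assoc _ _ p, hps.symm.eq, ← mul_assoc]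
    _ = q * (katoUnitary p q * star (katoUnitary p q)) := by
        rw [projTransition_mul hp.isIdempotentElem hq.isIdempotentElem, katoUnitary]; noncomm_ring
    _ = q := by rw [(Unitary.mem_iff.1 (katoUnitary_mem_unitary hp hq hpq)).2, mul_one]

end Kato

def IsUnitaryTransport (F : ℝ → A) (b : ℝ) (U : ℝ → A) : Prop :=
  Continuous U ∧ (∀ t, U t ∈ unitary A) ∧ ∀ t, 0 ≤ t → U t * F 0 * star (U t) = F (min t b)

theorem isUnitaryTransport_one (F : ℝ → A) : IsUnitaryTransport F 0 1 :=
  ⟨continuous_const, fun _ => one_mem _, fun t ht => by simp [min_eq_right ht]⟩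

theorem IsUnitaryTransport.katoUnitary_mul {F : ℝ → A} (hF : Continuous F)
    (hP : ∀ t, IsStarProjection (F t)) {b b' : ℝ} (hbb' : b ≤ b')
    (hclose : ∀ s ∈ Set.Icc b b', ‖F b - F s‖ < 1) {U : ℝ → A} (hU : IsUnitaryTransport F b U) :
    IsUnitaryTransport F b' fun t => katoUnitary (F b) (F (max b (min t b'))) * U t := by
  obtain ⟨hUc, hUu, hUF⟩ := hU
  have hmem : ∀ t, max b (min t b') ∈ Set.Icc b b' := fun t =>
    ⟨le_max_left _ _, max_le hbb' (min_le_right _ _)⟩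
  refine ⟨?_, fun t => mul_mem (katoUnitary_mem_unitary (hP b) (hP _) (hclose _ (hmem t))) (hUu t),
    fun t ht => ?_⟩
  · exact (Continuous.katoUnitary continuous_const (hF.comp (by fun_prop))
      (fun _ => (hP b).isSelfAdjoint) (fun _ => (hP _).isSelfAdjoint)
      fun t => hclose _ (hmem t)).mul hUc
  rw [star_mul, show ∀ w u x y : A, w * u * x * (y * star w) = w * (u * x * y) * star w by
    intros; noncomm_ring, hUF t ht]
  rcases le_total t b with htb | hbt
  · rw [max_eq_left ((min_le_left _ _).trans htb), katoUnitary_self (hP b).isIdempotentElem,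
      min_eq_left htb, min_eq_left (htb.trans hbb')]
    simp
  · rw [min_eq_right hbt, max_eq_right (le_min hbt hbb'),
      katoUnitary_mul_mul_star (hP b) (hP _) (hclose _ ⟨le_min hbt hbb', min_le_right _ _⟩)]

theorem UniformContinuous.exists_unitary_conj {F : ℝ → A} (hF : UniformContinuous F)
    (hP : ∀ t, IsStarProjection (F t)) (b : ℝ) :
    ∃ U : ℝ → A, Continuous U ∧ (∀ t, U t ∈ unitary A) ∧
      ∀ t ∈ Set.Icc 0 b, U t * F 0 * star (U t) = F t := by
  obtain ⟨c, hc, hFc⟩ := Metric.uniformContinuous_iff.1 hF 1 one_pos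
  have hstep : ∀ n : ℕ, ∃ U, IsUnitaryTransport F (n * (c / 2)) U := by
    intro n
    induction n with
    | zero => exact ⟨1, by simpa using isUnitaryTransport_one F⟩
    | succ n ih =>
      obtain ⟨U, hU⟩ := ih
      refine ⟨_, hU.katoUnitary_mul hF.continuous hP (by push_cast; linarith) fun s hs => ?_⟩
      rw [← dist_eq_norm]
      refine hFc ?_
      rw [Real.dist_eq, abs_sub_comm, abs_of_nonneg (by linarith [hs.1])]
      push_cast at hs
      linarith [hs.2]
  obtain ⟨n, hn⟩ := exists_nat_ge (b / (c / 2))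
  obtain ⟨U, hUc, hUu, hUF⟩ := hstep n
  refine ⟨U, hUc, hUu, fun t ht => ?_⟩
  rw [hUF t ht.1, min_eq_left]
  calc t ≤ b := ht.2
    _ ≤ n * (c / 2) := (div_le_iff₀ (by positivity)).1 hn

end CStarAlgebra

section InnerProductSpace

variable {𝕜 E : Type*} [RCLike 𝕜] [NormedAddCommGroup E] [InnerProductSpace 𝕜 E]

theorem OrthonormalBasis.norm_apply_le_sum_mul {ι F : Type*} [Fintype ι] [SeminormedAddCommGroup F]
    [NormedSpace 𝕜 F] (b : OrthonormalBasis ι 𝕜 E) (S : E →ₗ[𝕜] F) (v : E) :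
    ‖S v‖ ≤ (∑ i, ‖S (b i)‖) * ‖v‖ := by
  conv_lhs => rw [← b.sum_repr' v]
  rw [map_sum, Finset.sum_mul]
  refine (norm_sum_le _ _).trans (Finset.sum_le_sum fun i _ => ?_)
  rw [map_smul, norm_smul, mul_comm]
  gcongr
  simpa [b.orthonormal.1 i] using norm_inner_le_norm (𝕜 := 𝕜) (b i) v

variable [CompleteSpace E]

theorem IsStarProjection.norm_sub_apply_sq {P : E →L[𝕜] E} (hP : IsStarProjection P) (x : E) :
    ‖x - P x‖ ^ 2 = ‖x‖ ^ 2 - RCLike.re ⟪P x, x⟫_𝕜 := by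
  have h : ⟪P x, P x⟫_𝕜 = ⟪P x, x⟫_𝕜 := by
    have := hP.isSelfAdjoint.isSymmetric (P x) x
    rwa [ContinuousLinearMap.coe_coe, ← mul_apply_eq_comp, hP.isIdempotentElem.eq, eq_comm] at this
  rw [norm_sub_sq (𝕜 := 𝕜), ← inner_self_eq_norm_sq (𝕜 := 𝕜) (P x), h, inner_re_symm]
  ring

theorem IsStarProjection.norm_apply_le {P : E →L[𝕜] E} (hP : IsStarProjection P) (x : E) :
    ‖P x‖ ≤ ‖x‖ :=
  (P.le_opNorm x).trans (mul_le_of_le_one_left (norm_nonneg x) (hP.norm_le P))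

theorem IsStarProjection.apply_of_mem_range {P : E →L[𝕜] E} (hP : IsStarProjection P) {v : E}
    (hv : v ∈ LinearMap.range (P : E →ₗ[𝕜] E)) : P v = v := by
  obtain ⟨y, rfl⟩ := hv
  exact congr($(hP.isIdempotentElem.eq) y)

theorem IsStarProjection.norm_sub_le_of_finrank_eq {P Q : E →L[𝕜] E} (hP : IsStarProjection P)
    (hQ : IsStarProjection Q) [FiniteDimensional 𝕜 (LinearMap.range (P : E →ₗ[𝕜] E))]
    [FiniteDimensional 𝕜 (LinearMap.range (Q : E →ₗ[𝕜] E))]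
    (hrank : Module.finrank 𝕜 (LinearMap.range (P : E →ₗ[𝕜] E)) =
      Module.finrank 𝕜 (LinearMap.range (Q : E →ₗ[𝕜] E)))
    {δ : ℝ} (hδ₀ : 0 ≤ δ) (hδ : δ ≤ 2⁻¹)
    (hPQ : ∀ v ∈ LinearMap.range (P : E →ₗ[𝕜] E), ‖v - Q v‖ ≤ δ * ‖v‖) :
    ‖P - Q‖ ≤ 3 * δ := by
  have hQv : ∀ v ∈ LinearMap.range (P : E →ₗ[𝕜] E), ‖v‖ ≤ 2 * ‖Q v‖ := fun v hv => by
    have := norm_le_norm_sub_add v (Q v)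
    nlinarith [hPQ v hv, norm_nonneg v]
  -- by equality of the finite ranks, `Q` maps `range P` onto `range Q`
  let L : LinearMap.range (P : E →ₗ[𝕜] E) →ₗ[𝕜] LinearMap.range (Q : E →ₗ[𝕜] E) :=
    ((Q : E →ₗ[𝕜] E).domRestrict _).codRestrict _ fun v => LinearMap.mem_range_self _ _
  have hL : Function.Surjective L := by
    refine (LinearMap.injective_iff_surjective_of_finrank_eq_finrank hrank).1 ?_
    refine (injective_iff_map_eq_zero L).2 fun v hv => ?_
    have h0 : Q v = 0 := congr(Subtype.val $hv)
    exact Subtype.ext (norm_le_zero_iff.1 (by simpa [h0] using hQv v v.2))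
  have h₁ : ‖(1 - Q) * P‖ ≤ δ := by
    refine ContinuousLinearMap.opNorm_le_bound _ hδ₀ fun x => ?_
    calc ‖((1 - Q) * P) x‖ = ‖P x - Q (P x)‖ := rfl
      _ ≤ δ * ‖P x‖ := hPQ _ (LinearMap.mem_range_self _ x)
      _ ≤ δ * ‖x‖ := by gcongr; exact hP.norm_apply_le x
  have h₂ : ‖(1 - P) * Q‖ ≤ 2 * δ := by
    refine ContinuousLinearMap.opNorm_le_bound _ (by positivity) fun x => ?_
    obtain ⟨v, hv⟩ := hL ⟨Q x, LinearMap.mem_range_self _ x⟩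
    have hQv' : Q v = Q x := congr(Subtype.val $hv)
    calc ‖((1 - P) * Q) x‖ = ‖(1 - P) (Q v - v)‖ := by
          simp [← hQv', hP.apply_of_mem_range v.2]
      _ ≤ ‖Q v - v‖ := hP.one_sub.norm_apply_le _
      _ ≤ δ * (2 * ‖Q v‖) := by
          rw [norm_sub_rev]; exact (hPQ v v.2).trans (by gcongr; exact hQv v v.2)
      _ ≤ 2 * δ * ‖x‖ := by
          rw [hQv']; nlinarith [hQ.norm_apply_le x]
  have h₂' : ‖star ((1 - P) * Q)‖ ≤ 2 * δ := by
    rwa [ContinuousLinearMap.star_eq_adjoint, LinearIsometryEquiv.norm_map]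
  calc ‖P - Q‖ = ‖(1 - Q) * P - star ((1 - P) * Q)‖ := by
        rw [star_mul, hQ.isSelfAdjoint.star_eq, hP.one_sub.isSelfAdjoint.star_eq]; noncomm_ring
    _ ≤ δ + 2 * δ := (norm_sub_le _ _).trans (add_le_add h₁ h₂')
    _ = 3 * δ := by ring

theorem continuous_of_lowerSemicontinuous_re_inner {X : Type*} [TopologicalSpace X]
    {f : X → E →L[𝕜] E} (hP : ∀ x, IsStarProjection (f x))
    (hlsc : ∀ v, LowerSemicontinuous fun x => RCLike.re ⟪f x v, v⟫_𝕜)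
    [∀ x, FiniteDimensional 𝕜 (LinearMap.range (f x : E →ₗ[𝕜] E))] {k : ℕ}
    (hrank : ∀ x, Module.finrank 𝕜 (LinearMap.range (f x : E →ₗ[𝕜] E)) = k) :
    Continuous f := by
  refine continuous_iff_continuousAt.2 fun x₀ => Metric.tendsto_nhds.2 fun ε hε => ?_
  set K := LinearMap.range (f x₀ : E →ₗ[𝕜] E)
  let b := stdOrthonormalBasis 𝕜 K
  set δ : ℝ := min (ε / 4) 2⁻¹
  have hδ₀ : 0 < δ := by positivity
  have hδε : δ ≤ ε / 4 := min_le_left _ _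
  set η : ℝ := δ / (k + 1)
  have hη : 0 < η := by positivity
  have hbn : ∀ i, ‖(b i : E)‖ = 1 := fun i => b.orthonormal.1 i
  have hev : ∀ᶠ x in 𝓝 x₀, ∀ i, 1 - η ^ 2 < RCLike.re ⟪f x (b i), b i⟫_𝕜 := by
    refine eventually_all.2 fun i => hlsc _ x₀ _ ?_
    have : RCLike.re ⟪f x₀ (b i), b i⟫_𝕜 = 1 := by
      rw [(hP x₀).apply_of_mem_range (b i).2, inner_self_eq_norm_sq, hbn i, one_pow]
    show 1 - η ^ 2 < RCLike.re ⟪f x₀ (b i), b i⟫_𝕜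
    rw [this]
    exact sub_lt_self 1 (by positivity)
  filter_upwards [hev] with x hx
  have hbi : ∀ i, ‖(b i : E) - f x (b i)‖ ≤ η := fun i => by
    have := (hP x).norm_sub_apply_sq (b i : E)
    rw [hbn i] at this
    nlinarith [hx i, norm_nonneg ((b i : E) - f x (b i))]
  have hsum : ∑ i, ‖(b i : E) - f x (b i)‖ ≤ δ :=
    calc ∑ i, ‖(b i : E) - f x (b i)‖ ≤ ∑ _i, η := Finset.sum_le_sum fun i _ => hbi i
      _ = k * η := by simp [K, hrank x₀]
      _ ≤ δ := by rw [mul_div_assoc', div_le_iff₀ (by positivity)]; nlinarith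
  have hclose : ∀ v ∈ K, ‖v - f x v‖ ≤ δ * ‖v‖ := fun v hv =>
    calc ‖v - f x v‖ ≤ (∑ i, ‖(b i : E) - f x (b i)‖) * ‖v‖ :=
        b.norm_apply_le_sum_mul (((1 : E →L[𝕜] E) - f x : E →ₗ[𝕜] E) ∘ₗ K.subtype) ⟨v, hv⟩
      _ ≤ δ * ‖v‖ := by gcongr
  rw [dist_comm, dist_eq_norm]
  calc ‖f x₀ - f x‖ ≤ 3 * δ := (hP x₀).norm_sub_le_of_finrank_eq (hP x) (by rw [hrank, hrank])
        hδ₀.le (min_le_right _ _) hclose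
    _ < ε := by linarith

end InnerProductSpace

theorem stmt1_general (H : Type*) [NormedAddCommGroup H] [InnerProductSpace ℂ H]
    [CompleteSpace H]
    (k : ℕ) (f : I01 → H →L[ℂ] H) (hf : IsLSCProjOp H f)
    (hrank : ∀ t, OpRank H (f t) k) :
    ∃ (V : I01 → H →L[ℂ] H) (p : H →L[ℂ] H),
      Continuous V ∧ IsSelfAdjoint p ∧ p * p = p ∧ OpRank H p k ∧
      ∀ t, V t * ContinuousLinearMap.adjoint (V t) = p ∧
        ContinuousLinearMap.adjoint (V t) * V t = f t := by
  have hP : ∀ t, IsStarProjection (f t) := fun t => ⟨(hf.1 t).2, (hf.1 t).1⟩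
  have : ∀ t, FiniteDimensional ℂ (LinearMap.range (f t : H →ₗ[ℂ] H)) := fun t => (hrank t).1
  have hf_cont : Continuous f :=
    continuous_of_lowerSemicontinuous_re_inner hP hf.2 fun t => (hrank t).2
  set F : ℝ → H →L[ℂ] H := Set.IccExtend zero_le_one f
  have hF : UniformContinuous F := (CompactSpace.uniformContinuous_of_continuous hf_cont).comp
    (LipschitzWith.projIcc zero_le_one).uniformContinuous
  obtain ⟨U, hUc, hUu, hUF⟩ := hF.exists_unitary_conj (fun _ => hP _) 1
  have hp : IsStarProjection (F 0) := hP _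
  refine ⟨fun t => F 0 * star (U t), F 0, by fun_prop, hp.isSelfAdjoint, hp.isIdempotentElem.eq,
    hrank _, fun t => ?_⟩
  simp only [← ContinuousLinearMap.star_eq_adjoint, star_mul, star_star, hp.isSelfAdjoint.star_eq]
  constructor
  · calc F 0 * star (U t) * (U t * F 0) = F 0 * (star (U t) * U t) * F 0 := by noncomm_ring
      _ = F 0 := by rw [(Unitary.mem_iff.1 (hUu t)).1, mul_one, hp.isIdempotentElem.eq]
  · calc U t * F 0 * (F 0 * star (U t)) = U t * (F 0 * F 0) * star (U t) := by noncomm_ring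
      _ = f t := by rw [hp.isIdempotentElem.eq, hUF t t.2]; exact Set.IccExtend_val _ f t

/-- a lower semicontinuous projection-valued function on `[0,1]`
with values rank-`k` projections in `B(H)` is trivialized by a norm-continuous
family of partial isometries: `V(t)V(t)* = p` (a fixed rank-`k` projection) and
`V(t)*V(t) = f(t)`. -/
theorem stmt1 (H : Type*) [NormedAddCommGroup H] [InnerProductSpace ℂ H]
    [CompleteSpace H] [TopologicalSpace.SeparableSpace H]
    (hinf : ¬ FiniteDimensional ℂ H)
    (k : ℕ) (f : I01 → H →L[ℂ] H) (hf : IsLSCProjOp H f)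
    (hrank : ∀ t, OpRank H (f t) k) :
    ∃ (V : I01 → H →L[ℂ] H) (p : H →L[ℂ] H),
      Continuous V ∧ IsSelfAdjoint p ∧ p * p = p ∧ OpRank H p k ∧
      ∀ t, V t * ContinuousLinearMap.adjoint (V t) = p ∧
        ContinuousLinearMap.adjoint (V t) * V t = f t :=
  stmt1_general H k f hf hrank
end
end

section
/- Let n ≥ 1 and k ≥ 0 be integers and let f : [0,1] → M_n(ℂ) be a lower semicontinuous projection-valued function such that every projection f(t) has rank exactly k. Then there exist a continuous function U : [0,1] → M_n(ℂ) whose values are unitary matrices and a projection p ∈ M_n(ℂ) of rank k such that U(t)·f(t)·U(t)* = p for all t ∈ [0,1]. -/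
noncomputable section
open scoped Matrix

/-!
Lower semicontinuity together with constant rank forces continuity: for `q = f t₀` the squared
Hilbert–Schmidt distance `‖f t - q‖₂² = 2 (rank q - Re tr (q f(t) q))` is upper semicontinuous in
`t`, nonnegative and zero at `t₀`.

A continuous path of projections is then trivialised by Kato's construction. If `‖p - q‖ < 1`,
then `a = p q + (1 - p)(1 - q)` is normal, `a⋆a = 1 - (p - q)²` is invertible and `a q = p a`, so
the unitary part `a |a|⁻¹` of its polar decomposition conjugates `q` to `p`, continuously in
`(p, q)`. Composing these unitaries along a fine partition of `[0,1]` gives `U`.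
-/

open Filter Topology

namespace Matrix

variable {m n : Type*} [Fintype m] [Fintype n]

lemma rank_eq_trace_of_isIdempotentElem {K : Type*} [Field K] [DecidableEq m]
    {e : Matrix m m K} (he : IsIdempotentElem e) : (e.rank : K) = e.trace := by
  have h : IsIdempotentElem (toLin' e) := he.map (toLinAlgEquiv' : Matrix m m K ≃ₐ[K] _)
  rw [← trace_toLin'_eq, (LinearMap.IsIdempotentElem.isProj_range _ h).trace, rank, toLin'_apply']

lemma re_trace_conjTranspose_mul_self (B : Matrix m n ℂ) :
    (Bᴴ * B).trace.re = ∑ j, ∑ i, ‖B i j‖ ^ 2 := by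
  simp [trace, mul_apply, Complex.re_sum, ← Complex.normSq_eq_norm_sq, Complex.normSq_apply]

lemma trace_conjTranspose_mul_mul (B : Matrix m n ℂ) (p : Matrix m m ℂ) :
    (Bᴴ * p * B).trace = ∑ j, star (fun i => B i j) ⬝ᵥ (p *ᵥ fun i => B i j) := by
  simp only [trace, diag, mul_apply, dotProduct, mulVec, Finset.mul_sum, Finset.sum_mul,
    mul_assoc, conjTranspose_apply, Pi.star_apply]
  exact Finset.sum_congr rfl fun _ _ => Finset.sum_comm

lemma trace_conjTranspose_sub_mul_sub {R : Type*} [CommRing R] [StarRing R]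
    {p q : Matrix m m R} (hp : IsStarProjection p) (hq : IsStarProjection q) :
    ((p - q)ᴴ * (p - q)).trace = p.trace + q.trace - 2 * (qᴴ * p * q).trace := by
  have hp' : pᴴ = p := hp.isSelfAdjoint
  have hq' : qᴴ = q := hq.isSelfAdjoint
  have hqpq : (q * p * q).trace = (q * p).trace := by
    rw [trace_mul_cycle, hq.isIdempotentElem.eq]
  rw [conjTranspose_sub, hp', hq', sub_mul, mul_sub, mul_sub, hp.isIdempotentElem.eq,
    hq.isIdempotentElem.eq, trace_sub, trace_sub, trace_sub, trace_mul_comm p q, hqpq]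
  ring

lemma tendsto_zero_of_tendsto_re_trace_conjTranspose_mul_self {X : Type*} {l : Filter X}
    {B : X → Matrix m n ℂ} (h : Tendsto (fun x => ((B x)ᴴ * B x).trace.re) l (𝓝 0)) :
    Tendsto B l (𝓝 0) := by
  refine tendsto_pi_nhds.2 fun i => tendsto_pi_nhds.2 fun j => ?_
  refine squeeze_zero_norm (fun x => Real.le_sqrt_of_sq_le ?_) (by simpa using h.sqrt)
  rw [re_trace_conjTranspose_mul_self]
  have hsq : ∀ j, 0 ≤ ∑ i, ‖B x i j‖ ^ 2 := fun _ => by positivity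
  exact (Finset.single_le_sum (f := fun i => ‖B x i j‖ ^ 2) (fun _ _ => sq_nonneg _)
    (Finset.mem_univ i)).trans (Finset.single_le_sum (fun j _ => hsq j) (Finset.mem_univ j))

theorem continuous_of_lowerSemicontinuous_of_trace_eq {X : Type*} [TopologicalSpace X]
    {f : X → Matrix m m ℂ} (hproj : ∀ x, IsStarProjection (f x))
    (hlsc : ∀ v, LowerSemicontinuous fun x => (star v ⬝ᵥ f x *ᵥ v).re)
    (htr : ∀ x y, (f x).trace = (f y).trace) : Continuous f := by
  refine continuous_iff_continuousAt.2 fun x₀ => ?_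
  set q := f x₀
  set G : X → ℝ := fun x => (qᴴ * f x * q).trace.re
  have hG : LowerSemicontinuous G := by
    simp only [G, trace_conjTranspose_mul_mul, Complex.re_sum]
    exact lowerSemicontinuous_sum fun j _ => hlsc _
  have hdist : ∀ x, ((f x - q)ᴴ * (f x - q)).trace.re = 2 * (q.trace.re - G x) := fun x => by
    rw [trace_conjTranspose_sub_mul_sub (hproj x) (hproj x₀), htr x x₀]
    simp only [G, Complex.sub_re, Complex.add_re, Complex.mul_re, Complex.re_ofNat,
      Complex.im_ofNat, zero_mul, sub_zero]
    ring
  have hdist_nonneg : ∀ x, 0 ≤ 2 * (q.trace.re - G x) := fun x => by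
    rw [← hdist, re_trace_conjTranspose_mul_self]; positivity
  have hGx₀ : G x₀ = q.trace.re := by
    linarith [hdist x₀, show ((q - q)ᴴ * (q - q)).trace.re = 0 by simp]
  have hdist_tendsto :
      Tendsto (fun x => ((f x - q)ᴴ * (f x - q)).trace.re) (𝓝 x₀) (𝓝 0) := by
    simp only [hdist]
    refine tendsto_order.2 ⟨fun a ha => .of_forall fun x => ha.trans_le (hdist_nonneg x),
      fun a ha => ?_⟩
    filter_upwards [hG x₀ (G x₀ - a / 2) (by linarith)] with x hx
    linarith
  simpa [ContinuousAt] using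
    (tendsto_zero_of_tendsto_re_trace_conjTranspose_mul_self hdist_tendsto).add_const q

end Matrix

section Ring
variable {R : Type*} [Ring R] {p q : R}

def projIntertwiner (p q : R) : R := p * q + (1 - p) * (1 - q)

lemma projIntertwiner_self (hp : IsIdempotentElem p) : projIntertwiner p p = 1 := by
  simp only [projIntertwiner, hp.eq, hp.one_sub.eq]
  abel

lemma projIntertwiner_mul_right (hp : IsIdempotentElem p) (hq : IsIdempotentElem q) :
    projIntertwiner p q * q = p * projIntertwiner p q := by
  simp only [projIntertwiner, add_mul, mul_add, mul_assoc, hq.eq, ← mul_assoc p p, hp.eq,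
    sub_mul, mul_sub, one_mul, mul_one]
  abel

lemma projIntertwiner_swap_mul (hp : IsIdempotentElem p) (hq : IsIdempotentElem q) :
    projIntertwiner q p * projIntertwiner p q = 1 - (p - q) * (p - q) := by
  have hp' : ∀ x, p * (p * x) = p * x := fun x => by rw [← mul_assoc, hp.eq]
  simp only [projIntertwiner, mul_add, add_mul, mul_sub, sub_mul, mul_one, one_mul, mul_assoc,
    hp.eq, hq.eq, hp']
  abel

lemma commute_one_sub_sub_mul_self (hp : IsIdempotentElem p) (hq : IsIdempotentElem q) :
    Commute q (1 - (p - q) * (p - q)) := by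
  have hq' : ∀ x, q * (q * x) = q * x := fun x => by rw [← mul_assoc, hq.eq]
  simp only [Commute, SemiconjBy, mul_sub, sub_mul, mul_one, one_mul, mul_assoc, hp.eq, hq.eq,
    hq']
  abel

variable [StarRing R]

lemma star_projIntertwiner (hp : IsSelfAdjoint p) (hq : IsSelfAdjoint q) :
    star (projIntertwiner p q) = projIntertwiner q p := by
  simp [projIntertwiner, hp.star_eq, hq.star_eq]

lemma star_projIntertwiner_mul_self (hp : IsStarProjection p) (hq : IsStarProjection q) :
    star (projIntertwiner p q) * projIntertwiner p q = 1 - (p - q) * (p - q) := by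
  rw [star_projIntertwiner hp.isSelfAdjoint hq.isSelfAdjoint,
    projIntertwiner_swap_mul hp.isIdempotentElem hq.isIdempotentElem]

lemma isStarNormal_projIntertwiner (hp : IsStarProjection p) (hq : IsStarProjection q) :
    IsStarNormal (projIntertwiner p q) := by
  refine ⟨?_⟩
  rw [Commute, SemiconjBy, star_projIntertwiner_mul_self hp hq,
    star_projIntertwiner hp.isSelfAdjoint hq.isSelfAdjoint,
    projIntertwiner_swap_mul hq.isIdempotentElem hp.isIdempotentElem, ← neg_sub p q, neg_mul_neg]

end Ring

lemma isUnit_star_projIntertwiner_mul_self {R : Type*} [NormedRing R] [StarRing R]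
    [HasSummableGeomSeries R] {p q : R} (hp : IsStarProjection p) (hq : IsStarProjection q)
    (h : ‖p - q‖ < 1) : IsUnit (star (projIntertwiner p q) * projIntertwiner p q) := by
  have : ‖(p - q) * (p - q)‖ < 1 :=
    (norm_mul_le _ _).trans_lt (mul_lt_one_of_nonneg_of_lt_one_left (norm_nonneg _) h h.le)
  rw [star_projIntertwiner_mul_self hp hq]
  exact (Units.oneSub _ this).isUnit

section Polar
variable {A : Type*} [CStarAlgebra A] [PartialOrder A] [StarOrderedRing A]

def polarUnitary (a : A) : A := a * Ring.inverse (CFC.sqrt (star a * a))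

lemma exists_polarUnitary_eq_mul_inv {a : A} (hb : IsUnit (star a * a)) :
    ∃ s : Aˣ, polarUnitary a = a * ↑s⁻¹ ∧ star s = s ∧ (s : A) * s = star a * a ∧
      ∀ x, Commute x (star a * a) → Commute x s := by
  obtain ⟨s, hs⟩ := (CFC.isUnit_sqrt_iff _).mpr hb
  refine ⟨s, by rw [polarUnitary, ← hs, Ring.inverse_unit], ?_, ?_, fun x hx => ?_⟩
  · exact Units.ext <| by rw [Units.coe_star, hs, (CFC.sqrt_nonneg _).isSelfAdjoint.star_eq]
  · rw [hs, CFC.sqrt_mul_sqrt_self _ (star_mul_self_nonneg a)]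
  · rw [hs, CFC.sqrt_eq_cfc]
    exact (hx.symm.cfc_nnreal _).symm

lemma polarUnitary_mem_unitary {a : A} (ha : IsStarNormal a) (hb : IsUnit (star a * a)) :
    polarUnitary a ∈ unitary A := by
  obtain ⟨s, hu, hss, hs2, hcomm⟩ := exists_polarUnitary_eq_mul_inv hb
  have has : Commute a ↑s⁻¹ :=
    (hcomm a (ha.star_comm_self.symm.mul_right (Commute.refl a))).units_inv_right
  have hstar : star (polarUnitary a) = ↑s⁻¹ * star a := by
    rw [hu, star_mul, ← Units.coe_star_inv, hss]
  rw [Unitary.mem_iff, hstar, hu]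
  constructor
  · rw [mul_assoc, ← mul_assoc (star a), ← hs2]
    simp
  · calc a * ↑s⁻¹ * (↑s⁻¹ * star a) = ↑s⁻¹ * ↑s⁻¹ * (a * star a) := by
          rw [← mul_assoc, has.eq, mul_assoc _ a, has.eq]; simp only [mul_assoc]
      _ = 1 := by rw [← ha.star_comm_self.eq, ← hs2]; simp [← mul_assoc]

lemma polarUnitary_mul_eq {a p q : A} (hb : IsUnit (star a * a)) (hq : Commute q (star a * a))
    (h : a * q = p * a) : polarUnitary a * q = p * polarUnitary a := by
  obtain ⟨s, hu, -, -, hcomm⟩ := exists_polarUnitary_eq_mul_inv hb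
  rw [hu, mul_assoc, ← (hcomm q hq).units_inv_right.eq, ← mul_assoc, h, mul_assoc]

lemma polarUnitary_one : polarUnitary (1 : A) = 1 := by
  simp [polarUnitary, CFC.sqrt_one]

lemma continuousOn_polarUnitary :
    ContinuousOn (polarUnitary (A := A)) {a | IsUnit (star a * a)} := by
  intro a ha
  obtain ⟨s, hs⟩ := (CFC.isUnit_sqrt_iff _).mpr ha
  have hsqrt : Continuous fun a : A => CFC.sqrt (star a * a) :=
    CFC.continuousOn_sqrt.comp_continuous (by fun_prop) fun a => star_mul_self_nonneg a
  have hinv : ContinuousAt Ring.inverse (CFC.sqrt (star a * a)) :=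
    hs ▸ NormedRing.inverse_continuousAt s
  exact (continuousAt_id.mul
    (hinv.comp (f := fun a : A => CFC.sqrt (star a * a)) hsqrt.continuousAt)).continuousWithinAt

end Polar

section Transport
variable {A : Type*} [CStarAlgebra A] [PartialOrder A] [StarOrderedRing A] {p q : A}

lemma polarUnitary_projIntertwiner_mem_unitary (hp : IsStarProjection p)
    (hq : IsStarProjection q) (h : ‖p - q‖ < 1) :
    polarUnitary (projIntertwiner p q) ∈ unitary A :=
  polarUnitary_mem_unitary (isStarNormal_projIntertwiner hp hq)
    (isUnit_star_projIntertwiner_mul_self hp hq h)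

lemma polarUnitary_projIntertwiner_conj (hp : IsStarProjection p) (hq : IsStarProjection q)
    (h : ‖p - q‖ < 1) :
    polarUnitary (projIntertwiner p q) * q * star (polarUnitary (projIntertwiner p q)) = p := by
  have hcomm := commute_one_sub_sub_mul_self hp.isIdempotentElem hq.isIdempotentElem
  rw [← star_projIntertwiner_mul_self hp hq] at hcomm
  rw [polarUnitary_mul_eq (isUnit_star_projIntertwiner_mul_self hp hq h) hcomm
    (projIntertwiner_mul_right hp.isIdempotentElem hq.isIdempotentElem), mul_assoc,
    Unitary.mul_star_self_of_mem (polarUnitary_projIntertwiner_mem_unitary hp hq h), mul_one]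

lemma polarUnitary_projIntertwiner_self (hp : IsIdempotentElem p) :
    polarUnitary (projIntertwiner p p) = 1 := by
  rw [projIntertwiner_self hp, polarUnitary_one]

lemma Continuous.polarUnitary_projIntertwiner {X : Type*} [TopologicalSpace X] {p q : X → A}
    (hpc : Continuous p) (hqc : Continuous q) (hp : ∀ x, IsStarProjection (p x))
    (hq : ∀ x, IsStarProjection (q x)) (h : ∀ x, ‖p x - q x‖ < 1) :
    Continuous fun x => polarUnitary (projIntertwiner (p x) (q x)) :=
  continuousOn_polarUnitary.comp_continuous (by unfold projIntertwiner; fun_prop) fun x =>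
    isUnit_star_projIntertwiner_mul_self (hp x) (hq x) (h x)

end Transport

def UnitarilyTrivial {X A : Type*} [TopologicalSpace X] [Monoid A] [StarMul A]
    [TopologicalSpace A] (g : X → A) (p : A) : Prop :=
  ∃ W : X → A, Continuous W ∧ (∀ x, W x ∈ unitary A) ∧ ∀ x, W x * p * star (W x) = g x

section Gluing
variable {A : Type*} [CStarAlgebra A] [PartialOrder A] [StarOrderedRing A]

lemma UnitarilyTrivial.min_of_le {g : ℝ → A} (hg : Continuous g)
    (hproj : ∀ t, IsStarProjection (g t)) {p : A} {a b : ℝ} (hab : a ≤ b)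
    (hclose : ∀ t ∈ Set.Icc a b, ‖g t - g a‖ < 1)
    (h : UnitarilyTrivial (fun t => g (min t a)) p) :
    UnitarilyTrivial (fun t => g (min t b)) p := by
  obtain ⟨W, hWc, hWu, hW⟩ := h
  beta_reduce at hW
  set r : ℝ → ℝ := fun t => max a (min t b)
  have hr : ∀ t, r t ∈ Set.Icc a b := fun t =>
    ⟨le_max_left _ _, max_le hab (min_le_right _ _)⟩
  set V : ℝ → A := fun t => polarUnitary (projIntertwiner (g (r t)) (g a))
  have hV : ∀ t, V t ∈ unitary A := fun t =>
    polarUnitary_projIntertwiner_mem_unitary (hproj _) (hproj a) (hclose _ (hr t))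
  refine ⟨fun t => V t * W t, ?_, fun t => mul_mem (hV t) (hWu t), fun t => ?_⟩
  · exact ((hg.comp (by fun_prop)).polarUnitary_projIntertwiner continuous_const
      (fun t => hproj _) (fun _ => hproj a) fun t => hclose _ (hr t)).mul hWc
  · show V t * W t * p * star (V t * W t) = g (min t b)
    rw [star_mul, show V t * W t * p * (star (W t) * star (V t)) =
      V t * (W t * p * star (W t)) * star (V t) by simp only [mul_assoc], hW t]
    rcases le_total t a with hta | hat
    · have hrt : r t = a := max_eq_left ((min_le_left _ _).trans hta)
      simp only [V, hrt, polarUnitary_projIntertwiner_self (hproj a).isIdempotentElem, one_mul,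
        star_one, mul_one, min_eq_left hta, min_eq_left (hta.trans hab)]
    · have hrt : r t = min t b := max_eq_right (le_min hat hab)
      rw [min_eq_right hat, ← hrt]
      exact polarUnitary_projIntertwiner_conj (hproj _) (hproj a) (hclose _ (hr t))

theorem unitarilyTrivial_of_continuous {f : I01 → A} (hf : Continuous f)
    (hproj : ∀ t, IsStarProjection (f t)) : UnitarilyTrivial f (f 0) := by
  set g : ℝ → A := Set.IccExtend zero_le_one f
  have hg : Continuous g := hf.Icc_extend'
  have hgproj : ∀ t, IsStarProjection (g t) := fun t => hproj _
  obtain ⟨δ, hδ, hδg⟩ := Metric.uniformContinuous_iff.mp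
    ((CompactSpace.uniformContinuous_of_continuous hf).comp
      (LipschitzWith.projIcc zero_le_one).uniformContinuous) 1 one_pos
  have hprefix : ∀ N : ℕ, UnitarilyTrivial (fun t => g (min t (N * (δ / 2)))) (g 0) := by
    intro N
    induction N with
    | zero =>
      refine ⟨fun _ => 1, continuous_const, fun _ => one_mem _, fun t => ?_⟩
      simp only [CharP.cast_eq_zero, zero_mul, one_mul, star_one, mul_one, g]
      rw [Set.IccExtend_of_le_left _ _ (min_le_right t 0), Set.IccExtend_of_le_left _ _ le_rfl]
    | succ N ih =>
      refine ih.min_of_le hg hgproj (by push_cast; linarith) fun t ht => ?_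
      rw [← dist_eq_norm]
      refine hδg ?_
      push_cast at ht
      rw [Real.dist_eq, abs_lt]
      constructor <;> linarith [ht.1, ht.2]
  obtain ⟨N, hN⟩ := exists_nat_ge (2 / δ)
  obtain ⟨W, hWc, hWu, hW⟩ := hprefix N
  beta_reduce at hW
  refine ⟨W ∘ Subtype.val, hWc.comp continuous_subtype_val, fun t => hWu t, fun t => ?_⟩
  have ht : (t : ℝ) ≤ N * (δ / 2) := t.2.2.trans (by rw [div_le_iff₀ hδ] at hN; linarith)
  have hg0 : g 0 = f 0 := Set.IccExtend_val _ f 0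
  simpa [min_eq_left ht, hg0, g] using hW t

end Gluing

theorem stmt2_general (n k : ℕ) (f : I01 → Matrix (Fin n) (Fin n) ℂ)
    (hf : IsLSCProjMat n f) (hrank : ∀ t, (f t).rank = k) :
    ∃ (U : I01 → Matrix (Fin n) (Fin n) ℂ) (p : Matrix (Fin n) (Fin n) ℂ),
      Continuous U ∧ (∀ t, U t * (U t)ᴴ = 1 ∧ (U t)ᴴ * U t = 1) ∧
      pᴴ = p ∧ p * p = p ∧ p.rank = k ∧
      ∀ t, U t * f t * (U t)ᴴ = p := by
  have hproj : ∀ t, IsStarProjection (f t) := fun t => ⟨(hf.1 t).2, (hf.1 t).1⟩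
  have hcont : Continuous f :=
    Matrix.continuous_of_lowerSemicontinuous_of_trace_eq hproj hf.2 fun s t => by
      rw [← Matrix.rank_eq_trace_of_isIdempotentElem (hproj s).isIdempotentElem,
        ← Matrix.rank_eq_trace_of_isIdempotentElem (hproj t).isIdempotentElem, hrank, hrank]
  obtain ⟨W, hWc, hWu, hW⟩ := open scoped Matrix.Norms.L2Operator MatrixOrder in
    unitarilyTrivial_of_continuous hcont hproj
  refine ⟨fun t => star (W t), f 0, hWc.star, fun t => ⟨?_, ?_⟩, (hf.1 0).1, (hf.1 0).2,
    hrank 0, fun t => ?_⟩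
  · exact Unitary.mul_star_self_of_mem (Unitary.star_mem (hWu t))
  · exact Unitary.star_mul_self_of_mem (Unitary.star_mem (hWu t))
  · calc star (W t) * f t * star (star (W t))
        = star (W t) * W t * f 0 * (star (W t) * W t) := by
          rw [← hW t, star_star]; simp only [mul_assoc]
      _ = f 0 := by rw [Unitary.star_mul_self_of_mem (hWu t), one_mul, mul_one]

/-- a lower semicontinuous projection-valued function on `[0,1]`
with values rank-`k` projections in `Mₙ(ℂ)` is unitarily trivializable: there
are a continuous unitary-valued `U` and a rank-`k` projection `p` with
`U(t) f(t) U(t)* = p` for all `t`. -/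
theorem stmt2 (n k : ℕ) (hn : 1 ≤ n) (f : I01 → Matrix (Fin n) (Fin n) ℂ)
    (hf : IsLSCProjMat n f) (hrank : ∀ t, (f t).rank = k) :
    ∃ (U : I01 → Matrix (Fin n) (Fin n) ℂ) (p : Matrix (Fin n) (Fin n) ℂ),
      Continuous U ∧ (∀ t, U t * (U t)ᴴ = 1 ∧ (U t)ᴴ * U t = 1) ∧
      pᴴ = p ∧ p * p = p ∧ p.rank = k ∧
      ∀ t, U t * f t * (U t)ᴴ = p :=
  stmt2_general n k f hf hrank
end
end

section
/- Let A be a C*-algebra and a ∈ A. Let H₁ denote the topological closure in A of the set {(a*·a)·x·(a*·a) : x ∈ A} and H₂ the topological closure of {(a·a*)·x·(a·a*) : x ∈ A}. Then H₁ and H₂ are closed *-subalgebras of A and there exists an isometric *-isomorphism from H₁ onto H₂. (H₁ and H₂ are the hereditary sub-C*-algebras of A generated by a*a and by aa*, respectively.) -/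
/-!
Let `a = v |a|` be the polar decomposition, `|a| = (a⋆a)^(1/2)`. Conjugation `z ↦ v z v⋆` sends
`|a| c |a|` to `a c a⋆`, and the C⋆-identity gives `‖a c a⋆‖ = ‖|a| c |a|‖`; since `(a⋆a) A (a⋆a)`
lies in `|a| A |a|`, conjugation by `v` is an isometric ⋆-homomorphism on the closure of
`(a⋆a) A (a⋆a)`, and its image is dense in, hence equal to, the closure of `(a a⋆) A (a a⋆)`.

The partial isometry `v` only exists in the bidual. Inside `A` it is replaced by
`wₙ = a kₙ(a⋆a)`, where `kₙ(t) = √t t³ / (t⁴ + rₙ⁴)` with `rₙ → 0`, so that `‖wₙ‖ ≤ 1` and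
`wₙ |a| = a eₙ → a` for `eₙ = t⁴ / (t⁴ + rₙ⁴)` evaluated at `a⋆a`. The contractions `z ↦ wₙ z wₙ⋆`
converge on `(a⋆a) A (a⋆a)`, hence on its closure, and the limit is the required map.
-/

open Filter Topology CFC

namespace NonUnitalStarSubalgebra

section Corner

variable (R : Type*) {A : Type*} [CommSemiring R] [NonUnitalSemiring A] [StarRing A] [Module R A]
  [IsScalarTower R A A] [SMulCommClass R A A]

def corner {b : A} (hb : IsSelfAdjoint b) : NonUnitalStarSubalgebra R A where
  carrier := {z | ∃ x, z = b * x * b}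
  add_mem' := by
    rintro _ _ ⟨x, rfl⟩ ⟨y, rfl⟩
    exact ⟨x + y, by rw [mul_add, add_mul]⟩
  zero_mem' := ⟨0, by simp⟩
  mul_mem' := by
    rintro _ _ ⟨x, rfl⟩ ⟨y, rfl⟩
    exact ⟨x * (b * b) * y, by simp only [mul_assoc]⟩
  smul_mem' := by
    rintro c _ ⟨x, rfl⟩
    exact ⟨c • x, by rw [mul_smul_comm, smul_mul_assoc]⟩
  star_mem' := by
    rintro _ ⟨x, rfl⟩
    exact ⟨star x, by rw [star_mul, star_mul, hb.star_eq, mul_assoc]⟩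

variable [TopologicalSpace A] [IsSemitopologicalSemiring A] [ContinuousConstSMul R A]
  [ContinuousStar A]

def hereditary {b : A} (hb : IsSelfAdjoint b) : NonUnitalStarSubalgebra R A :=
  (corner R hb).topologicalClosure

theorem coe_hereditary {b : A} (hb : IsSelfAdjoint b) :
    (hereditary R hb : Set A) = closure {z | ∃ x, z = b * x * b} :=
  rfl

theorem isClosed_hereditary {b : A} (hb : IsSelfAdjoint b) :
    IsClosed (hereditary R hb : Set A) :=
  isClosed_closure

end Corner

end NonUnitalStarSubalgebra

section LipschitzLimit

variable {X Y : Type*} [PseudoMetricSpace X] [PseudoMetricSpace Y]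

theorem cauchySeq_apply_of_mem_closure {F : ℕ → X → Y} (hF : ∀ n, LipschitzWith 1 (F n))
    {s : Set X} (hs : ∀ x ∈ s, CauchySeq (F · x)) {x : X} (hx : x ∈ closure s) :
    CauchySeq (F · x) := by
  rw [Metric.cauchySeq_iff']
  intro ε hε
  obtain ⟨y, hys, hxy⟩ := Metric.mem_closure_iff.mp hx (ε / 3) (by positivity)
  obtain ⟨N, hN⟩ := Metric.cauchySeq_iff'.mp (hs y hys) (ε / 3) (by positivity)
  have hclose : ∀ n, dist (F n x) (F n y) < ε / 3 := fun n =>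
    ((hF n).dist_le_mul x y).trans_lt (by simpa using hxy)
  refine ⟨N, fun n hn => ?_⟩
  calc dist (F n x) (F N x)
      ≤ dist (F n x) (F n y) + dist (F n y) (F N y) + dist (F N y) (F N x) :=
        dist_triangle4 _ _ _ _
    _ < ε / 3 + ε / 3 + ε / 3 := by
        gcongr
        · exact hclose n
        · exact hN n hn
        · rw [dist_comm]; exact hclose N
    _ = ε := by ring

theorem lipschitzOnWith_of_tendsto {ι : Type*} {l : Filter ι} [l.NeBot] {F : ι → X → Y}
    {K : NNReal} (hF : ∀ i, LipschitzWith K (F i)) {f : X → Y} {t : Set X}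
    (hf : ∀ x ∈ t, Tendsto (F · x) l (𝓝 (f x))) : LipschitzOnWith K f t :=
  LipschitzOnWith.of_dist_le_mul fun x hx y hy =>
    le_of_tendsto_of_tendsto' ((hf x hx).dist (hf y hy)) tendsto_const_nhds
      fun i => (hF i).dist_le_mul x y

end LipschitzLimit

section CStarRing

variable {E : Type*} [NonUnitalNormedRing E] [StarRing E] [CStarRing E]

theorem CStarRing.norm_eq_of_star_mul_self_eq {x y : E} (h : star x * x = star y * y) :
    ‖x‖ = ‖y‖ := by
  have hsq : ‖x‖ * ‖x‖ = ‖y‖ * ‖y‖ := by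
    rw [← CStarRing.norm_star_mul_self, h, CStarRing.norm_star_mul_self]
  exact (mul_self_inj (norm_nonneg x) (norm_nonneg y)).mp hsq

theorem CStarRing.norm_mul_sub_self_eq {x y : E} (h : star x * x = star y * y) (e : E) :
    ‖x * e - x‖ = ‖y * e - y‖ := by
  have expand : ∀ z : E, star (z * e - z) * (z * e - z) =
      star e * (star z * z) * e - star e * (star z * z) - star z * z * e + star z * z := by
    intro z
    rw [star_sub, star_mul]
    noncomm_ring
  exact CStarRing.norm_eq_of_star_mul_self_eq (by rw [expand, expand, h])

theorem lipschitzWith_one_mul_mul_star {x : E} (hx : ‖x‖ ≤ 1) :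
    LipschitzWith 1 fun z => x * z * star x := by
  refine LipschitzWith.of_dist_le_mul fun z w => ?_
  rw [dist_eq_norm, dist_eq_norm, ← sub_mul, ← mul_sub, NNReal.coe_one, one_mul]
  calc ‖x * (z - w) * star x‖ ≤ ‖x‖ * ‖z - w‖ * ‖star x‖ := norm_mul₃_le
    _ ≤ 1 * ‖z - w‖ * 1 := by gcongr; rwa [norm_star]
    _ = ‖z - w‖ := by ring

end CStarRing

theorem Real.abs_sqrt_mul_div_sub_sqrt_le {r t : ℝ} (hr : 0 < r) (ht : 0 ≤ t) :
    |√t * (t ^ 4 / (t ^ 4 + r ^ 4)) - √t| ≤ √r := by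
  apply Real.abs_le_sqrt
  have hD : 0 < t ^ 4 + r ^ 4 := by positivity
  -- AM-GM: `t⁴ - 4 t r³ + 3 r⁴ = (t - r)² (t² + 2 t r + 3 r²)`
  have amgm : t * r ^ 3 ≤ t ^ 4 + r ^ 4 := by
    nlinarith [mul_nonneg (sq_nonneg (t - r)) (by positivity : 0 ≤ t ^ 2 + 2 * t * r + 3 * r ^ 2)]
  have hsq : (√t * (t ^ 4 / (t ^ 4 + r ^ 4)) - √t) ^ 2 = t * r ^ 8 / (t ^ 4 + r ^ 4) ^ 2 := by
    rw [show (√t * (t ^ 4 / (t ^ 4 + r ^ 4)) - √t) ^ 2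
        = √t ^ 2 * (t ^ 4 / (t ^ 4 + r ^ 4) - 1) ^ 2 by ring, Real.sq_sqrt ht]
    field_simp
    ring
  rw [hsq, div_le_iff₀ (by positivity)]
  nlinarith [mul_nonneg hD.le (sub_nonneg.2 (mul_le_mul_of_nonneg_left amgm hr.le)),
    mul_nonneg (by positivity : 0 ≤ t * r ^ 4) (by positivity : 0 ≤ t ^ 4)]

namespace CFC

open NonUnitalStarSubalgebra

variable {A : Type*} [NonUnitalCStarAlgebra A] {r : ℝ}

noncomputable def approxUnit (a : A) (r : ℝ) : A :=
  cfcₙ (fun t : ℝ => t ^ 4 / (t ^ 4 + r ^ 4)) (star a * a)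

noncomputable def approxInvAbs (a : A) (r : ℝ) : A :=
  cfcₙ (fun t : ℝ => √t * t ^ 3 / (t ^ 4 + r ^ 4)) (star a * a)

theorem isSelfAdjoint_approxInvAbs (a : A) : IsSelfAdjoint (approxInvAbs a r) :=
  cfcₙ_predicate _ _

theorem norm_approxUnit_le (a : A) : ‖approxUnit a r‖ ≤ 1 := by
  refine norm_cfcₙ_le fun t _ => ?_
  rw [Real.norm_eq_abs, _root_.abs_of_nonneg (by positivity)]
  exact div_le_one_of_le₀ (le_add_of_nonneg_right (by positivity)) (by positivity)

theorem approxUnit_mem_corner (a : A) (hr : 0 < r) :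
    approxUnit a r ∈ corner ℂ (.star_mul_self a) := by
  have hD : ∀ t : ℝ, t ^ 4 + r ^ 4 ≠ 0 := fun t => by positivity
  set s : ℝ → ℝ := fun t => t ^ 2 / (t ^ 4 + r ^ 4)
  refine ⟨cfcₙ s (star a * a), ?_⟩
  have hf : (fun t : ℝ => t ^ 4 / (t ^ 4 + r ^ 4)) = fun t => t * s t * t := by
    ext t; simp only [s]; ring
  rw [approxUnit, hf, cfcₙ_mul (fun t => t * s t) (fun t : ℝ => t) (star a * a),
    cfcₙ_mul (fun t : ℝ => t) s (star a * a), cfcₙ_id' ℝ (star a * a)]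

variable [PartialOrder A] [StarOrderedRing A]

theorem norm_abs_mul (a c : A) : ‖abs a * c‖ = ‖a * c‖ :=
  CStarRing.norm_eq_of_star_mul_self_eq <| by
    rw [star_mul, star_mul, (abs_nonneg a).isSelfAdjoint.star_eq, mul_assoc, mul_assoc,
      ← mul_assoc (abs a), abs_mul_abs, mul_assoc]

theorem norm_abs_mul_sub_abs (a e : A) : ‖abs a * e - abs a‖ = ‖a * e - a‖ :=
  CStarRing.norm_mul_sub_self_eq (by rw [(abs_nonneg a).isSelfAdjoint.star_eq, abs_mul_abs]) e

theorem norm_abs_mul_mul_abs (a c : A) : ‖abs a * c * abs a‖ = ‖a * c * star a‖ := by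
  have hsa := (abs_nonneg a).isSelfAdjoint.star_eq
  calc ‖abs a * c * abs a‖ = ‖a * (c * abs a)‖ := by rw [← norm_abs_mul a, mul_assoc]
    _ = ‖abs a * (star c * star a)‖ := by
        rw [← norm_star, star_mul, star_mul, hsa, ← mul_assoc]
    _ = ‖a * c * star a‖ := by
        rw [norm_abs_mul, ← norm_star, star_mul, star_mul, star_star, star_star, mul_assoc]

theorem quasispectrum_star_mul_self_nonneg (a : A) :
    ∀ t ∈ quasispectrum ℝ (star a * a), 0 ≤ t :=
  quasispectrum_nonneg_of_nonneg _ (star_mul_self_nonneg a)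

theorem abs_eq_cfcₙ_sqrt (a : A) : abs a = cfcₙ Real.sqrt (star a * a) :=
  sqrt_eq_real_sqrt _ (star_mul_self_nonneg a)

theorem abs_mul_approxInvAbs (a : A) (hr : 0 < r) :
    abs a * approxInvAbs a r = approxUnit a r := by
  have hD : ∀ t : ℝ, t ^ 4 + r ^ 4 ≠ 0 := fun t => by positivity
  rw [abs_eq_cfcₙ_sqrt, approxInvAbs, ← cfcₙ_mul ..]
  refine cfcₙ_congr fun t ht => ?_
  rw [← mul_div_assoc, ← mul_assoc,
    Real.mul_self_sqrt (quasispectrum_star_mul_self_nonneg a t ht)]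
  ring

theorem approxInvAbs_mul_abs (a : A) (hr : 0 < r) :
    approxInvAbs a r * abs a = approxUnit a r := by
  rw [← abs_mul_approxInvAbs a hr, abs_eq_cfcₙ_sqrt, approxInvAbs]
  exact (cfcₙ_commute_cfcₙ _ _ _).eq

theorem norm_mul_approxUnit_sub_le (a : A) (hr : 0 < r) : ‖a * approxUnit a r - a‖ ≤ √r := by
  have hD : ∀ t : ℝ, t ^ 4 + r ^ 4 ≠ 0 := fun t => by positivity
  rw [← norm_abs_mul_sub_abs, abs_eq_cfcₙ_sqrt, approxUnit,
    ← cfcₙ_mul Real.sqrt _ (star a * a), ← cfcₙ_sub _ Real.sqrt (star a * a)]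
  exact norm_cfcₙ_le fun t ht =>
    Real.abs_sqrt_mul_div_sub_sqrt_le hr (quasispectrum_star_mul_self_nonneg a t ht)

theorem tendsto_mul_approxUnit (a : A) :
    Tendsto (fun n : ℕ => a * approxUnit a (1 / (n + 1))) atTop (𝓝 a) := by
  have hr : Tendsto (fun n : ℕ => √(1 / ((n : ℝ) + 1))) atTop (𝓝 0) := by
    have := (Real.continuous_sqrt.tendsto 0).comp
      (tendsto_one_div_add_atTop_nhds_zero_nat (𝕜 := ℝ))
    rwa [Real.sqrt_zero] at this
  rw [tendsto_iff_norm_sub_tendsto_zero]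
  exact squeeze_zero (fun _ => norm_nonneg _)
    (fun n => norm_mul_approxUnit_sub_le a (by positivity)) hr

theorem mul_mul_star_mem_hereditary (a c : A) :
    a * c * star a ∈ hereditary ℂ (.mul_star_self a) := by
  have h := tendsto_mul_approxUnit a
  refine mem_closure_of_tendsto ((h.mul (tendsto_const_nhds (x := c))).mul h.star)
    (Eventually.of_forall fun n => ?_)
  obtain ⟨s, hs⟩ := approxUnit_mem_corner a (r := 1 / (n + 1)) (by positivity)
  refine ⟨a * s * (star a * a) * c * (star a * a) * star s * star a, ?_⟩
  rw [hs]
  simp only [star_mul, star_star, mul_assoc]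

/- `polarApprox a n` is the approximant `wₙ` of the partial isometry `v` in `a = v |a|`, so
`polarConj a z = v z v⋆`. -/
noncomputable def polarApprox (a : A) (n : ℕ) : A :=
  a * approxInvAbs a (1 / (n + 1))

noncomputable def polarConj (a z : A) : A :=
  limUnder atTop fun n => polarApprox a n * z * star (polarApprox a n)

theorem norm_polarApprox_le (a : A) (n : ℕ) : ‖polarApprox a n‖ ≤ 1 := by
  rw [polarApprox, ← norm_abs_mul, abs_mul_approxInvAbs a (by positivity)]
  exact norm_approxUnit_le a

theorem lipschitzWith_polarApprox_conj (a : A) (n : ℕ) :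
    LipschitzWith 1 fun z => polarApprox a n * z * star (polarApprox a n) :=
  lipschitzWith_one_mul_mul_star (norm_polarApprox_le a n)

theorem tendsto_polarApprox_conj_abs_mul_mul_abs (a c : A) :
    Tendsto (fun n => polarApprox a n * (abs a * c * abs a) * star (polarApprox a n)) atTop
      (𝓝 (a * c * star a)) := by
  have key : ∀ n : ℕ, polarApprox a n * (abs a * c * abs a) * star (polarApprox a n)
      = a * approxUnit a (1 / (n + 1)) * c * star (a * approxUnit a (1 / (n + 1))) := by
    intro n
    rw [← approxInvAbs_mul_abs a (by positivity), polarApprox, star_mul, star_mul, star_mul,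
      (abs_nonneg a).isSelfAdjoint.star_eq, (isSelfAdjoint_approxInvAbs a).star_eq]
    simp only [mul_assoc]
  simp only [key]
  have h := tendsto_mul_approxUnit a
  exact (h.mul tendsto_const_nhds).mul h.star

theorem exists_eq_abs_mul_mul_abs {a z : A} (hz : z ∈ corner ℂ (.star_mul_self a)) :
    ∃ c, z = abs a * c * abs a := by
  obtain ⟨x, rfl⟩ := hz
  exact ⟨abs a * x * abs a, by simp only [← abs_mul_abs a, mul_assoc]⟩

theorem polarConj_abs_mul_mul_abs (a c : A) :
    polarConj a (abs a * c * abs a) = a * c * star a :=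
  (tendsto_polarApprox_conj_abs_mul_mul_abs a c).limUnder_eq

variable {a z w : A}

theorem tendsto_polarConj (hz : z ∈ hereditary ℂ (.star_mul_self a)) :
    Tendsto (fun n => polarApprox a n * z * star (polarApprox a n)) atTop
      (𝓝 (polarConj a z)) := by
  refine tendsto_nhds_limUnder (cauchySeq_tendsto_of_complete ?_)
  refine cauchySeq_apply_of_mem_closure (lipschitzWith_polarApprox_conj a) (fun x hx => ?_) hz
  obtain ⟨c, rfl⟩ := exists_eq_abs_mul_mul_abs hx
  exact (tendsto_polarApprox_conj_abs_mul_mul_abs a c).cauchySeq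

theorem continuousOn_polarConj (a : A) :
    ContinuousOn (polarConj a) (hereditary ℂ (.star_mul_self a)) :=
  (lipschitzOnWith_of_tendsto (lipschitzWith_polarApprox_conj a)
    fun _ hz => tendsto_polarConj hz).continuousOn

theorem polarConj_add (hz : z ∈ hereditary ℂ (.star_mul_self a))
    (hw : w ∈ hereditary ℂ (.star_mul_self a)) :
    polarConj a (z + w) = polarConj a z + polarConj a w :=
  tendsto_nhds_unique (tendsto_polarConj (add_mem hz hw)) <| by
    simpa only [mul_add, add_mul] using (tendsto_polarConj hz).add (tendsto_polarConj hw)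

theorem polarConj_sub (hz : z ∈ hereditary ℂ (.star_mul_self a))
    (hw : w ∈ hereditary ℂ (.star_mul_self a)) :
    polarConj a (z - w) = polarConj a z - polarConj a w :=
  tendsto_nhds_unique (tendsto_polarConj (sub_mem hz hw)) <| by
    simpa only [mul_sub, sub_mul] using (tendsto_polarConj hz).sub (tendsto_polarConj hw)

theorem polarConj_smul (c : ℂ) (hz : z ∈ hereditary ℂ (.star_mul_self a)) :
    polarConj a (c • z) = c • polarConj a z :=
  tendsto_nhds_unique (tendsto_polarConj (SMulMemClass.smul_mem c hz)) <| by
    simpa only [mul_smul_comm, smul_mul_assoc] using (tendsto_polarConj hz).const_smul c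

theorem norm_polarConj (hz : z ∈ hereditary ℂ (.star_mul_self a)) :
    ‖polarConj a z‖ = ‖z‖ := by
  refine Set.EqOn.of_subset_closure (f := fun z => ‖polarConj a z‖) (g := norm) ?_
    (continuousOn_polarConj a).norm continuous_norm.continuousOn subset_closure subset_rfl hz
  intro x hx
  obtain ⟨c, rfl⟩ := exists_eq_abs_mul_mul_abs hx
  simp only [polarConj_abs_mul_mul_abs, norm_abs_mul_mul_abs]

theorem polarConj_star (hz : z ∈ hereditary ℂ (.star_mul_self a)) :
    polarConj a (star z) = star (polarConj a z) := by
  refine Set.EqOn.of_subset_closure (f := fun z => polarConj a (star z))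
    (g := fun z => star (polarConj a z)) ?_
    ((continuousOn_polarConj a).comp continuous_star.continuousOn fun _ hx => star_mem hx)
    (continuousOn_polarConj a).star subset_closure subset_rfl hz
  intro x hx
  obtain ⟨c, rfl⟩ := exists_eq_abs_mul_mul_abs hx
  simp only [star_mul, (abs_nonneg a).isSelfAdjoint.star_eq, ← mul_assoc,
    polarConj_abs_mul_mul_abs, star_star]

theorem polarConj_mul (hz : z ∈ hereditary ℂ (.star_mul_self a))
    (hw : w ∈ hereditary ℂ (.star_mul_self a)) :
    polarConj a (z * w) = polarConj a z * polarConj a w := by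
  set C : Set A := (corner ℂ (IsSelfAdjoint.star_mul_self a) : Set A)
  set H : Set A := (hereditary ℂ (IsSelfAdjoint.star_mul_self a) : Set A)
  have hcont := continuousOn_polarConj a
  have hC : Set.EqOn (fun p : A × A => polarConj a (p.1 * p.2))
      (fun p => polarConj a p.1 * polarConj a p.2) (C ×ˢ C) := by
    rintro ⟨x, y⟩ ⟨hx, hy⟩
    obtain ⟨c, rfl⟩ := exists_eq_abs_mul_mul_abs hx
    obtain ⟨d, rfl⟩ := exists_eq_abs_mul_mul_abs hy
    have hxy : abs a * c * abs a * (abs a * d * abs a)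
        = abs a * (c * (star a * a) * d) * abs a := by
      simp only [← abs_mul_abs a, mul_assoc]
    dsimp only
    rw [hxy, polarConj_abs_mul_mul_abs, polarConj_abs_mul_mul_abs, polarConj_abs_mul_mul_abs]
    simp only [mul_assoc]
  have hH : Set.EqOn (fun p : A × A => polarConj a (p.1 * p.2))
      (fun p => polarConj a p.1 * polarConj a p.2) (H ×ˢ H) :=
    hC.of_subset_closure (hcont.comp continuous_mul.continuousOn fun p hp => mul_mem hp.1 hp.2)
      ((hcont.comp continuousOn_fst fun p hp => hp.1).mul
        (hcont.comp continuousOn_snd fun p hp => hp.2))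
      (Set.prod_mono subset_closure subset_closure) (by rw [closure_prod_eq]; exact subset_rfl)
  simpa only using hH (Set.mk_mem_prod hz hw)

theorem dist_polarConj (hz : z ∈ hereditary ℂ (.star_mul_self a))
    (hw : w ∈ hereditary ℂ (.star_mul_self a)) :
    dist (polarConj a z) (polarConj a w) = dist z w := by
  rw [dist_eq_norm, dist_eq_norm, ← polarConj_sub hz hw, norm_polarConj (sub_mem hz hw)]

theorem injOn_polarConj (a : A) : Set.InjOn (polarConj a) (hereditary ℂ (.star_mul_self a)) :=
  fun _ hz _ hw h => dist_eq_zero.1 (by rw [← dist_polarConj hz hw, h, dist_self])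

theorem polarConj_mem_hereditary (hz : z ∈ hereditary ℂ (.star_mul_self a)) :
    polarConj a z ∈ hereditary ℂ (.mul_star_self a) := by
  refine (isClosed_hereditary ℂ _).mem_of_tendsto (tendsto_polarConj hz)
    (Eventually.of_forall fun n => ?_)
  have h := mul_mul_star_mem_hereditary a (approxInvAbs a (1 / (n + 1)) * z *
    star (approxInvAbs a (1 / (n + 1))))
  simpa only [polarApprox, star_mul, mul_assoc, SetLike.mem_coe] using h

theorem isClosed_image_polarConj (a : A) :
    IsClosed (polarConj a '' hereditary ℂ (.star_mul_self a)) := by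
  set H := hereditary ℂ (IsSelfAdjoint.star_mul_self a)
  have hcomplete : CompleteSpace H := isClosed_closure.completeSpace_coe
  have hiso : Isometry fun z : H => polarConj a z :=
    Isometry.of_dist_eq fun z w => dist_polarConj z.2 w.2
  rw [Set.image_eq_range]
  exact hiso.isUniformInducing.isComplete_range.isClosed

theorem mul_approxUnit_conj_eq_polarConj (a x : A) (hr : 0 < r) :
    a * approxUnit a r * x * star (a * approxUnit a r)
      = polarConj a (star a * a * (approxInvAbs a r * x * approxInvAbs a r) * (star a * a)) := by
  have hk := (isSelfAdjoint_approxInvAbs a (r := r)).star_eq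
  rw [← abs_mul_approxInvAbs a hr]
  generalize approxInvAbs a r = k at hk ⊢
  rw [show star a * a * (k * x * k) * (star a * a) = abs a * (abs a * k * x * k * abs a) * abs a by
      simp only [← abs_mul_abs a, mul_assoc],
    polarConj_abs_mul_mul_abs, star_mul, star_mul, hk, (abs_nonneg a).isSelfAdjoint.star_eq]
  simp only [mul_assoc]

theorem hereditary_subset_image_polarConj (a : A) :
    (hereditary ℂ (.mul_star_self a) : Set A) ⊆
      polarConj a '' hereditary ℂ (.star_mul_self a) := by
  refine closure_minimal ?_ (isClosed_image_polarConj a)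
  rintro _ ⟨y, rfl⟩
  have h := tendsto_mul_approxUnit a
  have hlim : Tendsto (fun n : ℕ => a * approxUnit a (1 / (n + 1)) * (star a * y * a) *
      star (a * approxUnit a (1 / (n + 1)))) atTop (𝓝 (a * star a * y * (a * star a))) := by
    simpa only [star_star, mul_assoc] using
      (h.mul (tendsto_const_nhds (x := star a * y * a))).mul h.star
  refine (isClosed_image_polarConj a).mem_of_tendsto hlim (Eventually.of_forall fun n => ?_)
  rw [mul_approxUnit_conj_eq_polarConj a _ (by positivity)]
  exact Set.mem_image_of_mem _ (subset_closure ⟨_, rfl⟩)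

theorem bijOn_polarConj (a : A) :
    Set.BijOn (polarConj a) (hereditary ℂ (.star_mul_self a)) (hereditary ℂ (.mul_star_self a)) :=
  ⟨fun _ hz => polarConj_mem_hereditary hz, injOn_polarConj a,
    hereditary_subset_image_polarConj a⟩

end CFC

/-- for an element `a` of a C*-algebra `A`, the hereditary
sub-C*-algebras generated by `a*a` and `aa*` (the closures of
`(a*a)·A·(a*a)` and `(aa*)·A·(aa*)`) are closed *-subalgebras of `A` and are
isometrically *-isomorphic. -/
theorem stmt13 (A : Type*) [NonUnitalCStarAlgebra A] (a : A)
    (H1 H2 : Set A)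
    (hH1 : H1 = closure {z : A | ∃ x : A, z = (star a * a) * x * (star a * a)})
    (hH2 : H2 = closure {z : A | ∃ x : A, z = (a * star a) * x * (a * star a)}) :
    IsClosed H1 ∧ IsClosed H2 ∧
    (∀ x ∈ H1, ∀ y ∈ H1, x + y ∈ H1 ∧ x * y ∈ H1) ∧
    (∀ x ∈ H1, star x ∈ H1 ∧ ∀ c : ℂ, c • x ∈ H1) ∧
    (∀ x ∈ H2, ∀ y ∈ H2, x + y ∈ H2 ∧ x * y ∈ H2) ∧
    (∀ x ∈ H2, star x ∈ H2 ∧ ∀ c : ℂ, c • x ∈ H2) ∧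
    ∃ φ : A → A, Set.BijOn φ H1 H2 ∧
      (∀ x ∈ H1, ∀ y ∈ H1, φ (x + y) = φ x + φ y ∧ φ (x * y) = φ x * φ y) ∧
      (∀ x ∈ H1, φ (star x) = star (φ x) ∧ (∀ c : ℂ, φ (c • x) = c • φ x) ∧
        ‖φ x‖ = ‖x‖) := by
  let _ := CStarAlgebra.spectralOrder A
  have _ := CStarAlgebra.spectralOrderedRing A
  subst hH1 hH2
  rw [← NonUnitalStarSubalgebra.coe_hereditary ℂ (.star_mul_self a),
    ← NonUnitalStarSubalgebra.coe_hereditary ℂ (.mul_star_self a)]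
  simp only [SetLike.mem_coe]
  refine ⟨NonUnitalStarSubalgebra.isClosed_hereditary ℂ _,
    NonUnitalStarSubalgebra.isClosed_hereditary ℂ _,
    fun x hx y hy => ⟨add_mem hx hy, mul_mem hx hy⟩,
    fun x hx => ⟨star_mem hx, fun c => SMulMemClass.smul_mem c hx⟩,
    fun x hx y hy => ⟨add_mem hx hy, mul_mem hx hy⟩,
    fun x hx => ⟨star_mem hx, fun c => SMulMemClass.smul_mem c hx⟩,
    CFC.polarConj a, CFC.bijOn_polarConj a,
    fun x hx y hy => ⟨CFC.polarConj_add hx hy, CFC.polarConj_mul hx hy⟩,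
    fun x hx => ⟨CFC.polarConj_star hx, fun c => CFC.polarConj_smul c hx, CFC.norm_polarConj hx⟩⟩
end

section
/- Let A be a unital C*-algebra, let (u_i)_{i∈I} be a net in A with 0 ≤ u_i ≤ 1 for all i, and let h, k ∈ A with 0 ≤ k ≤ h. If the net (u_i·h) converges in norm to h, then the net (u_i·k) converges in norm to k. (Consequently, the set {h ∈ A : u_i·h → h} is a hereditary subset of A: it contains every element k with 0 ≤ k ≤ h for some h in the set.) -/
/-!
Put `v = 1 - u`, so that `u k - k = -v k` with `0 ≤ v ≤ 1`. The C*-identity gives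
`‖v k‖² = ‖v k² v‖`, and `k² ≤ ‖k‖ k ≤ ‖k‖ h` survives conjugation by `v`, whence
`‖u k - k‖² ≤ ‖k‖ ‖v h v‖ ≤ ‖k‖ ‖u h - h‖`.
-/

open Filter Topology

namespace CStarAlgebra

section NonUnital

variable {A : Type*} [NonUnitalCStarAlgebra A] [PartialOrder A] [StarOrderedRing A]

lemma mul_self_le_norm_smul_self {k : A} (hk : 0 ≤ k) : k * k ≤ ‖k‖ • k := by
  set s := CFC.sqrt k
  have hs : s * s = k := CFC.sqrt_mul_sqrt_self k hk
  have hs_star : star s = s := (IsSelfAdjoint.of_nonneg (CFC.sqrt_nonneg k)).star_eq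
  calc k * k = s * k * star s := by rw [hs_star, ← hs, mul_assoc, mul_assoc, mul_assoc]
    _ ≤ ‖k‖ • (s * star s) := star_right_conjugate_le_norm_smul (.of_nonneg hk)
    _ = ‖k‖ • k := by rw [hs_star, hs]

lemma norm_mul_sq_le_of_nonneg_of_le {h k : A} (hk : 0 ≤ k) (hkh : k ≤ h) (a : A) :
    ‖a * k‖ ^ 2 ≤ ‖k‖ * ‖a * h * star a‖ := by
  have hk_star : star k = k := (IsSelfAdjoint.of_nonneg hk).star_eq
  have hsq : ‖a * k‖ ^ 2 = ‖a * (k * k) * star a‖ := by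
    rw [sq, ← CStarRing.norm_self_mul_star, star_mul, hk_star, mul_assoc, mul_assoc, mul_assoc]
  have hnonneg : 0 ≤ a * (k * k) * star a := by
    refine star_right_conjugate_nonneg ?_ a
    simpa [hk_star] using star_mul_self_nonneg k
  have hle : a * (k * k) * star a ≤ ‖k‖ • (a * h * star a) :=
    calc a * (k * k) * star a ≤ a * (‖k‖ • k) * star a :=
          star_right_conjugate_le_conjugate (mul_self_le_norm_smul_self hk) a
      _ ≤ a * (‖k‖ • h) * star a :=
          star_right_conjugate_le_conjugate (smul_le_smul_of_nonneg_left hkh (norm_nonneg k)) a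
      _ = ‖k‖ • (a * h * star a) := by rw [mul_smul_comm, smul_mul_assoc]
  calc ‖a * k‖ ^ 2 = ‖a * (k * k) * star a‖ := hsq
    _ ≤ ‖‖k‖ • (a * h * star a)‖ := norm_le_norm_of_nonneg_of_le hnonneg hle
    _ = ‖k‖ * ‖a * h * star a‖ := by rw [norm_smul, Real.norm_of_nonneg (norm_nonneg k)]

end NonUnital

variable {A : Type*} [CStarAlgebra A] [PartialOrder A] [StarOrderedRing A]

lemma norm_mul_sub_self_sq_le {u h k : A} (hu₀ : 0 ≤ u) (hu₁ : u ≤ 1) (hk : 0 ≤ k)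
    (hkh : k ≤ h) : ‖u * k - k‖ ^ 2 ≤ ‖k‖ * ‖u * h - h‖ := by
  set v := 1 - u
  have hv : 0 ≤ v := sub_nonneg.mpr hu₁
  have hv_norm : ‖v‖ ≤ 1 := (norm_le_one_iff_of_nonneg v hv).mpr (sub_le_self 1 hu₀)
  have hv_star : star v = v := (IsSelfAdjoint.of_nonneg hv).star_eq
  have hneg : ∀ x : A, u * x - x = -(v * x) := fun x => by simp only [v]; noncomm_ring
  rw [hneg, hneg, norm_neg, norm_neg]
  calc ‖v * k‖ ^ 2 ≤ ‖k‖ * ‖v * h * star v‖ := norm_mul_sq_le_of_nonneg_of_le hk hkh v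
    _ ≤ ‖k‖ * (‖v * h‖ * ‖v‖) := by rw [hv_star]; gcongr; exact norm_mul_le _ _
    _ ≤ ‖k‖ * ‖v * h‖ := by gcongr; exact mul_le_of_le_one_right (norm_nonneg _) hv_norm

end CStarAlgebra

theorem stmt19_general (A : Type*) [CStarAlgebra A] [PartialOrder A] [StarOrderedRing A]
    (I : Type*) [SemilatticeSup I]
    (u : I → A) (hu : ∀ i, 0 ≤ u i ∧ u i ≤ 1)
    (h k : A) (hk0 : 0 ≤ k) (hkh : k ≤ h)
    (hconv : Filter.Tendsto (fun i => u i * h) Filter.atTop (nhds h)) :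
    Filter.Tendsto (fun i => u i * k) Filter.atTop (nhds k) := by
  have hbound : Tendsto (fun i => ‖k‖ * ‖u i * h - h‖) atTop (𝓝 0) := by
    simpa using (tendsto_iff_norm_sub_tendsto_zero.mp hconv).const_mul ‖k‖
  have hsq : Tendsto (fun i => ‖u i * k - k‖ ^ 2) atTop (𝓝 0) :=
    squeeze_zero (fun _ => by positivity)
      (fun i => CStarAlgebra.norm_mul_sub_self_sq_le (hu i).1 (hu i).2 hk0 hkh) hbound
  rw [tendsto_iff_norm_sub_tendsto_zero]
  simpa [Real.sqrt_sq (norm_nonneg _)] using hsq.sqrt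

/-- in a unital C*-algebra (with its canonical order), if
`(u_i)` is a net with `0 ≤ u_i ≤ 1` and `u_i · h → h` in norm, then
`u_i · k → k` in norm for every `k` with `0 ≤ k ≤ h`; i.e. the set
`{h : u_i h → h}` is hereditary. -/
theorem stmt19 (A : Type*) [CStarAlgebra A] [PartialOrder A] [StarOrderedRing A]
    (I : Type*) [Nonempty I] [SemilatticeSup I]
    (u : I → A) (hu : ∀ i, 0 ≤ u i ∧ u i ≤ 1)
    (h k : A) (hk0 : 0 ≤ k) (hkh : k ≤ h)
    (hconv : Filter.Tendsto (fun i => u i * h) Filter.atTop (nhds h)) :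
    Filter.Tendsto (fun i => u i * k) Filter.atTop (nhds k) :=
  stmt19_general A I u hu h k hk0 hkh hconv
end
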